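/- arXiv:2605.23249 — 3 statements merged into one kernel-verified Lean document; each statement's English description precedes it below -/
import Mathlib

section
/- Let E be a real inner product space, let z ∈ E be a unit vector, let P and N be nonempty finite sets of unit vectors in E, let A = P ∪ N, and let τ > 0. Then (min over p ∈ P of (1/2)·‖z − p‖²) − (min over n ∈ N of (1/2)·‖z − n‖²) ≤ τ · [ −(1/|P|) · ∑_{p ∈ P} log( exp(⟪z, p⟫ / τ) / ∑_{a ∈ A} exp(⟪z, a⟫ / τ) ) ]. -/
/-! For unit vectors `½‖z - a‖² = 1 - ⟪z, a⟫`. With `S = ∑_{a ∈ A} exp (⟪z, a⟫ / τ)`, `τ` times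
the contrastive loss is `τ log S` minus the mean of `⟪z, p⟫` over `P`. The minimum over `P` is at
most the mean of `1 - ⟪z, p⟫`, while every `⟪z, n⟫ / τ` is at most the log-sum-exp `log S`, so
the minimum over `N` is at least `1 - τ log S`. -/

open Finset Real
open scoped BigOperators

lemma half_mul_norm_sub_sq_eq_one_sub_inner {F : Type*} [NormedAddCommGroup F]
    [InnerProductSpace ℝ F] {x y : F} (hx : ‖x‖ = 1) (hy : ‖y‖ = 1) :
    1 / 2 * ‖x - y‖ ^ 2 = 1 - inner ℝ x y := by
  rw [norm_sub_sq_real, hx, hy]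
  ring

namespace Real

variable {ι : Type*} {s : Finset ι}

lemma le_log_sum_exp (x : ι → ℝ) {i : ι} (hi : i ∈ s) :
    x i ≤ log (∑ j ∈ s, exp (x j)) :=
  (le_log_iff_exp_le (sum_pos (fun j _ => exp_pos (x j)) ⟨i, hi⟩)).2 <|
    single_le_sum (fun j _ => (exp_pos (x j)).le) hi

lemma neg_mean_log_exp_div (hs : s.Nonempty) (x : ι → ℝ) {S : ℝ} (hS : 0 < S) :
    -(1 / (#s : ℝ)) * ∑ i ∈ s, log (exp (x i) / S) = log S - 𝔼 i ∈ s, x i := by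
  have hlog : ∀ i ∈ s, log (exp (x i) / S) = x i - log S := fun i _ => by
    rw [log_div (exp_ne_zero _) hS.ne', log_exp]
  rw [sum_congr rfl hlog, neg_mul, one_div_mul_eq_div, ← expect_eq_sum_div_card,
    expect_sub_distrib, expect_const hs]
  ring

end Real

/-- Per-anchor form of the main lemma: the per-anchor refinement loss is
bounded above by `τ` times the per-anchor supervised contrastive loss. -/
theorem refinement_le_tau_mul_supCon
    {E : Type*} [NormedAddCommGroup E] [InnerProductSpace ℝ E] [DecidableEq E]
    (z : E) (hz : ‖z‖ = 1)
    (P N : Finset E) (hP : P.Nonempty) (hN : N.Nonempty)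
    (hPunit : ∀ p ∈ P, ‖p‖ = 1) (hNunit : ∀ n ∈ N, ‖n‖ = 1)
    (τ : ℝ) (hτ : 0 < τ) :
    P.inf' hP (fun p => (1 / 2 : ℝ) * ‖z - p‖ ^ 2)
      - N.inf' hN (fun n => (1 / 2 : ℝ) * ‖z - n‖ ^ 2) ≤
    τ * (-(1 / (P.card : ℝ)) *
      ∑ p ∈ P, Real.log (Real.exp ((inner ℝ z p : ℝ) / τ) /
        ∑ a ∈ P ∪ N, Real.exp ((inner ℝ z a : ℝ) / τ))) := by
  set S := ∑ a ∈ P ∪ N, exp (inner ℝ z a / τ)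
  have hS : 0 < S := sum_pos (fun a _ => exp_pos _) (hP.mono subset_union_left)
  have hloss : τ * (-(1 / (#P : ℝ)) * ∑ p ∈ P, log (exp (inner ℝ z p / τ) / S))
      = τ * log S - 𝔼 p ∈ P, inner ℝ z p := by
    rw [neg_mean_log_exp_div hP _ hS, ← expect_div]
    field_simp
  have hminP : P.inf' hP (fun p => 1 / 2 * ‖z - p‖ ^ 2) ≤ 1 - 𝔼 p ∈ P, inner ℝ z p := by
    calc P.inf' hP (fun p => 1 / 2 * ‖z - p‖ ^ 2) ≤ 𝔼 p ∈ P, (1 - inner ℝ z p) :=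
          le_expect hP fun p hp => by
            rw [← half_mul_norm_sub_sq_eq_one_sub_inner hz (hPunit p hp)]
            exact inf'_le (fun p => 1 / 2 * ‖z - p‖ ^ 2) hp
      _ = 1 - 𝔼 p ∈ P, inner ℝ z p := by rw [expect_sub_distrib, expect_const hP]
  have hminN : 1 - τ * log S ≤ N.inf' hN (fun n => 1 / 2 * ‖z - n‖ ^ 2) := by
    refine le_inf' hN _ fun n hn => ?_
    have hlse := le_log_sum_exp (fun a => inner ℝ z a / τ) (mem_union_right P hn)
    rw [div_le_iff₀' hτ] at hlse
    rw [half_mul_norm_sub_sq_eq_one_sub_inner hz (hNunit n hn)]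
    linarith
  rw [hloss]
  linarith
end

section
/- Let E be a real inner product space, let I be a finite index set, and for each i ∈ I let z_i ∈ E be a unit vector with nonempty finite sets P_i and N_i of unit vectors in E, and set A_i = P_i ∪ N_i. Let τ > 0. Define the refinement loss L_ref = ∑_{i ∈ I} [ min_{p ∈ P_i} (1/2)·‖z_i − p‖² − min_{n ∈ N_i} (1/2)·‖z_i − n‖² ] and the supervised contrastive loss L_SC = ∑_{i ∈ I} [ −(1/|P_i|) · ∑_{p ∈ P_i} log( exp(⟪z_i, p⟫ / τ) / ∑_{a ∈ A_i} exp(⟪z_i, a⟫ / τ) ) ]. Then L_ref ≤ τ · L_SC. -/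
/-!
For a unit vector `w`, `½‖z - w‖² = (‖z‖² + 1)/2 - ⟪z, w⟫`, so anchor by anchor the refinement
loss compares inner products up to a common constant. With `S = ∑_{a ∈ A} exp(⟪z, a⟫/τ)`, the
minimum over `P` is at most the average over `P`, and the minimum over `N` is at least the
constant minus `τ log S`, because log-sum-exp dominates every `⟪z, n⟫/τ`. On the other side the
SupCon term of the anchor is exactly `log S - (average of ⟪z, p⟫ over P)/τ`.
-/

open Finset Real
open scoped BigOperators InnerProductSpace

lemma Real.le_log_sum_exp_s9 {ι : Type*} {s : Finset ι} (f : ι → ℝ) {i : ι} (hi : i ∈ s) :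
    f i ≤ log (∑ j ∈ s, exp (f j)) :=
  (le_log_iff_exp_le (sum_pos (fun _ _ => exp_pos _) ⟨i, hi⟩)).2 <|
    single_le_sum (f := fun j => exp (f j)) (fun _ _ => (exp_pos _).le) hi

lemma Real.expect_log_exp_div {ι : Type*} {s : Finset ι} (hs : s.Nonempty) (f : ι → ℝ) {S : ℝ}
    (hS : S ≠ 0) : 𝔼 i ∈ s, log (exp (f i) / S) = 𝔼 i ∈ s, f i - log S := by
  simp_rw [log_div (exp_ne_zero _) hS, log_exp]
  rw [expect_sub_distrib, expect_const hs]

section Anchor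

variable {E : Type*} [NormedAddCommGroup E] [InnerProductSpace ℝ E]

lemma half_norm_sub_sq_of_norm_eq_one (z : E) {w : E} (hw : ‖w‖ = 1) :
    1 / 2 * ‖z - w‖ ^ 2 = (‖z‖ ^ 2 + 1) / 2 - ⟪z, w⟫_ℝ := by
  rw [norm_sub_sq_real, hw]
  ring

noncomputable def anchorRefinementLoss (z : E) {P N : Finset E} (hP : P.Nonempty)
    (hN : N.Nonempty) : ℝ :=
  P.inf' hP (fun p => 1 / 2 * ‖z - p‖ ^ 2) - N.inf' hN (fun n => 1 / 2 * ‖z - n‖ ^ 2)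

noncomputable def anchorSupConLoss [DecidableEq E] (τ : ℝ) (z : E) (P N : Finset E) : ℝ :=
  -(1 / (#P : ℝ)) *
    ∑ p ∈ P, log (exp (⟪z, p⟫_ℝ / τ) / ∑ a ∈ P ∪ N, exp (⟪z, a⟫_ℝ / τ))

variable [DecidableEq E]

lemma anchorSupConLoss_eq (τ : ℝ) (z : E) {P : Finset E} (hP : P.Nonempty) (N : Finset E) :
    anchorSupConLoss τ z P N =
      log (∑ a ∈ P ∪ N, exp (⟪z, a⟫_ℝ / τ)) - (𝔼 p ∈ P, ⟪z, p⟫_ℝ) / τ := by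
  have hS : ∑ a ∈ P ∪ N, exp (⟪z, a⟫_ℝ / τ) ≠ 0 :=
    (sum_pos (fun _ _ => exp_pos _) (hP.mono subset_union_left)).ne'
  rw [anchorSupConLoss, one_div, neg_mul, inv_mul_eq_div, ← expect_eq_sum_div_card,
    expect_log_exp_div hP _ hS, expect_div]
  ring

theorem anchorRefinementLoss_le_mul_anchorSupConLoss (z : E) {P N : Finset E}
    (hP : P.Nonempty) (hN : N.Nonempty) (hPunit : ∀ p ∈ P, ‖p‖ = 1)
    (hNunit : ∀ n ∈ N, ‖n‖ = 1) {τ : ℝ} (hτ : 0 < τ) :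
    anchorRefinementLoss z hP hN ≤ τ * anchorSupConLoss τ z P N := by
  set S := ∑ a ∈ P ∪ N, exp (⟪z, a⟫_ℝ / τ)
  have hPmin :
      P.inf' hP (fun p => 1 / 2 * ‖z - p‖ ^ 2) ≤ (‖z‖ ^ 2 + 1) / 2 - 𝔼 p ∈ P, ⟪z, p⟫_ℝ :=
    calc P.inf' hP (fun p => 1 / 2 * ‖z - p‖ ^ 2)
        ≤ 𝔼 p ∈ P, 1 / 2 * ‖z - p‖ ^ 2 := le_expect hP fun _ hp => inf'_le _ hp
      _ = (‖z‖ ^ 2 + 1) / 2 - 𝔼 p ∈ P, ⟪z, p⟫_ℝ := by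
        rw [expect_congr rfl fun p hp => half_norm_sub_sq_of_norm_eq_one z (hPunit p hp),
          expect_sub_distrib, expect_const hP]
  have hNmin : (‖z‖ ^ 2 + 1) / 2 - τ * log S ≤ N.inf' hN (fun n => 1 / 2 * ‖z - n‖ ^ 2) := by
    refine le_inf' _ _ fun n hn => ?_
    have hn_le : ⟪z, n⟫_ℝ / τ ≤ log S :=
      le_log_sum_exp_s9 (fun a => ⟪z, a⟫_ℝ / τ) (mem_union_right P hn)
    rw [half_norm_sub_sq_of_norm_eq_one z (hNunit n hn)]
    linarith [(div_le_iff₀' hτ).1 hn_le]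
  rw [anchorRefinementLoss, anchorSupConLoss_eq τ z hP N, mul_sub, mul_div_cancel₀ _ hτ.ne']
  linarith

end Anchor

theorem refinement_loss_le_tau_mul_supCon_loss_general
    {E ι : Type*} [NormedAddCommGroup E] [InnerProductSpace ℝ E] [DecidableEq E]
    (I : Finset ι) (z : ι → E) (P N : ι → Finset E)
    (hP : ∀ i ∈ I, (P i).Nonempty) (hN : ∀ i ∈ I, (N i).Nonempty)
    (hPunit : ∀ i ∈ I, ∀ p ∈ P i, ‖p‖ = 1)
    (hNunit : ∀ i ∈ I, ∀ n ∈ N i, ‖n‖ = 1)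
    (τ : ℝ) (hτ : 0 < τ) :
    (∑ i ∈ I.attach,
        ((P i.1).inf' (hP i.1 i.2) (fun p => (1 / 2 : ℝ) * ‖z i.1 - p‖ ^ 2)
          - (N i.1).inf' (hN i.1 i.2) (fun n => (1 / 2 : ℝ) * ‖z i.1 - n‖ ^ 2))) ≤
    τ * ∑ i ∈ I.attach,
        (-(1 / ((P i.1).card : ℝ)) *
          ∑ p ∈ P i.1, Real.log (Real.exp ((inner ℝ (z i.1) p : ℝ) / τ) /
            ∑ a ∈ P i.1 ∪ N i.1, Real.exp ((inner ℝ (z i.1) a : ℝ) / τ))) := by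
  rw [mul_sum]
  exact sum_le_sum fun i _ => anchorRefinementLoss_le_mul_anchorSupConLoss (z i.1)
    (hP i.1 i.2) (hN i.1 i.2) (hPunit i.1 i.2) (hNunit i.1 i.2) hτ

/-- Main lemma: the refinement loss is bounded above by `τ` times the
supervised contrastive loss. -/
theorem refinement_loss_le_tau_mul_supCon_loss
    {E ι : Type*} [NormedAddCommGroup E] [InnerProductSpace ℝ E] [DecidableEq E]
    (I : Finset ι) (z : ι → E) (P N : ι → Finset E)
    (hz : ∀ i ∈ I, ‖z i‖ = 1)
    (hP : ∀ i ∈ I, (P i).Nonempty) (hN : ∀ i ∈ I, (N i).Nonempty)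
    (hPunit : ∀ i ∈ I, ∀ p ∈ P i, ‖p‖ = 1)
    (hNunit : ∀ i ∈ I, ∀ n ∈ N i, ‖n‖ = 1)
    (τ : ℝ) (hτ : 0 < τ) :
    (∑ i ∈ I.attach,
        ((P i.1).inf' (hP i.1 i.2) (fun p => (1 / 2 : ℝ) * ‖z i.1 - p‖ ^ 2)
          - (N i.1).inf' (hN i.1 i.2) (fun n => (1 / 2 : ℝ) * ‖z i.1 - n‖ ^ 2))) ≤
    τ * ∑ i ∈ I.attach,
        (-(1 / ((P i.1).card : ℝ)) *
          ∑ p ∈ P i.1, Real.log (Real.exp ((inner ℝ (z i.1) p : ℝ) / τ) /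
            ∑ a ∈ P i.1 ∪ N i.1, Real.exp ((inner ℝ (z i.1) a : ℝ) / τ))) :=
  refinement_loss_le_tau_mul_supCon_loss_general I z P N hP hN hPunit hNunit τ hτ
end

section
/- Let E be a real inner product space, let I be a finite index set, and for each i ∈ I let z_i ∈ E be a unit vector with nonempty finite sets P_i and N_i of unit vectors in E, and set A_i = P_i ∪ N_i. Suppose 0 < τ ≤ 1. With L_ref = ∑_{i ∈ I} [ min_{p ∈ P_i} (1/2)·‖z_i − p‖² − min_{n ∈ N_i} (1/2)·‖z_i − n‖² ] and L_SC = ∑_{i ∈ I} [ −(1/|P_i|) · ∑_{p ∈ P_i} log( exp(⟪z_i, p⟫ / τ) / ∑_{a ∈ A_i} exp(⟪z_i, a⟫ / τ) ) ], we have L_ref ≤ L_SC. -/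
/-!
On unit vectors `½‖z - v‖² = 1 - ⟪z, v⟫`, so the refinement term of an anchor is
`max_{n ∈ N} ⟪z, n⟫ - max_{p ∈ P} ⟪z, p⟫`. Each positive `p` has SupCon term
`log S - ⟪z, p⟫ / τ` with `S = ∑_{a ∈ A} exp (⟪z, a⟫ / τ)`, and since `S` dominates every
exponential, `τ log S ≥ max_{n ∈ N} ⟪z, n⟫`. Hence the refinement term is at most `τ` times
each positive's SupCon term, so at most `τ` times their mean; these terms are nonnegative and
`τ ≤ 1` removes the factor.
-/

open Finset Real
open scoped BigOperators

lemma half_norm_sub_sq_eq_one_sub_inner {E : Type*} [NormedAddCommGroup E]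
    [InnerProductSpace ℝ E] {x y : E} (hx : ‖x‖ = 1) (hy : ‖y‖ = 1) :
    1 / 2 * ‖x - y‖ ^ 2 = 1 - inner ℝ x y := by
  rw [norm_sub_sq_real, hx, hy]
  ring

section Softmax

variable {α : Type*} {s : Finset α} {g : α → ℝ} {a : α}

lemma Real.le_log_sum_exp_s10 (ha : a ∈ s) : g a ≤ log (∑ b ∈ s, exp (g b)) :=
  (le_log_iff_exp_le (sum_pos (fun _ _ => exp_pos _) ⟨a, ha⟩)).2 <|
    single_le_sum (f := fun b => exp (g b)) (fun _ _ => (exp_pos _).le) ha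

lemma Real.neg_log_exp_div_sum_exp (ha : a ∈ s) :
    -log (exp (g a) / ∑ b ∈ s, exp (g b)) = log (∑ b ∈ s, exp (g b)) - g a := by
  rw [log_div (exp_ne_zero _) (sum_pos (fun _ _ => exp_pos _) ⟨a, ha⟩).ne', log_exp, neg_sub]

lemma Real.neg_log_exp_div_sum_exp_nonneg (ha : a ∈ s) :
    0 ≤ -log (exp (g a) / ∑ b ∈ s, exp (g b)) := by
  rw [neg_log_exp_div_sum_exp ha, sub_nonneg]
  exact le_log_sum_exp_s10 ha

end Softmax

section Anchor

variable {α : Type*} [DecidableEq α] {P N : Finset α} (hP : P.Nonempty) (hN : N.Nonempty)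
  (f : α → ℝ) {τ : ℝ}

/-- The paper's lemma `L_ref ≤ τ · L_SC`, for one anchor with similarity `f` and one positive `p`. -/
lemma inf'_one_sub_sub_inf'_one_sub_le_mul_neg_log_softmax (hτ : 0 < τ) {p : α} (hp : p ∈ P) :
    P.inf' hP (fun q => 1 - f q) - N.inf' hN (fun n => 1 - f n) ≤
      τ * -log (exp (f p / τ) / ∑ a ∈ P ∪ N, exp (f a / τ)) := by
  obtain ⟨n, hn, hn_min⟩ := exists_mem_eq_inf' hN (fun n => 1 - f n)
  have hP_min : P.inf' hP (fun q => 1 - f q) ≤ 1 - f p := inf'_le _ hp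
  have hn_le : f n / τ ≤ log (∑ a ∈ P ∪ N, exp (f a / τ)) :=
    le_log_sum_exp_s10 (g := fun a => f a / τ) (mem_union_right _ hn)
  rw [neg_log_exp_div_sum_exp (g := fun a => f a / τ) (mem_union_left _ hp), hn_min,
    mul_sub, mul_div_cancel₀ _ hτ.ne']
  rw [div_le_iff₀ hτ] at hn_le
  linarith

lemma inf'_one_sub_sub_inf'_one_sub_le_supCon (hτ : 0 < τ) (hτ1 : τ ≤ 1) :
    P.inf' hP (fun q => 1 - f q) - N.inf' hN (fun n => 1 - f n) ≤
      -(1 / (#P : ℝ)) * ∑ p ∈ P, log (exp (f p / τ) / ∑ a ∈ P ∪ N, exp (f a / τ)) := by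
  have hmean : -(1 / (#P : ℝ)) * ∑ p ∈ P, log (exp (f p / τ) / ∑ a ∈ P ∪ N, exp (f a / τ)) =
      𝔼 p ∈ P, -log (exp (f p / τ) / ∑ a ∈ P ∪ N, exp (f a / τ)) := by
    rw [expect_eq_sum_div_card, sum_neg_distrib]
    ring
  rw [hmean]
  refine le_expect hP fun p hp => ?_
  have hnonneg := neg_log_exp_div_sum_exp_nonneg (g := fun a => f a / τ) (mem_union_left N hp)
  calc _ ≤ τ * -log (exp (f p / τ) / ∑ a ∈ P ∪ N, exp (f a / τ)) :=
        inf'_one_sub_sub_inf'_one_sub_le_mul_neg_log_softmax hP hN f hτ hp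
    _ ≤ _ := mul_le_of_le_one_left hnonneg hτ1

end Anchor

/-- Corollary: for temperature `0 < τ ≤ 1`, the supervised contrastive loss
itself upper-bounds the refinement loss. -/
theorem refinement_loss_le_supCon_loss
    {E ι : Type*} [NormedAddCommGroup E] [InnerProductSpace ℝ E] [DecidableEq E]
    (I : Finset ι) (z : ι → E) (P N : ι → Finset E)
    (hz : ∀ i ∈ I, ‖z i‖ = 1)
    (hP : ∀ i ∈ I, (P i).Nonempty) (hN : ∀ i ∈ I, (N i).Nonempty)
    (hPunit : ∀ i ∈ I, ∀ p ∈ P i, ‖p‖ = 1)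
    (hNunit : ∀ i ∈ I, ∀ n ∈ N i, ‖n‖ = 1)
    (τ : ℝ) (hτ : 0 < τ) (hτ1 : τ ≤ 1) :
    (∑ i ∈ I.attach,
        ((P i.1).inf' (hP i.1 i.2) (fun p => (1 / 2 : ℝ) * ‖z i.1 - p‖ ^ 2)
          - (N i.1).inf' (hN i.1 i.2) (fun n => (1 / 2 : ℝ) * ‖z i.1 - n‖ ^ 2))) ≤
    ∑ i ∈ I.attach,
        (-(1 / ((P i.1).card : ℝ)) *
          ∑ p ∈ P i.1, Real.log (Real.exp ((inner ℝ (z i.1) p : ℝ) / τ) /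
            ∑ a ∈ P i.1 ∪ N i.1, Real.exp ((inner ℝ (z i.1) a : ℝ) / τ))) := by
  refine sum_le_sum fun ⟨i, hi⟩ _ => ?_
  rw [inf'_congr (hP i hi) rfl fun p hp =>
      half_norm_sub_sq_eq_one_sub_inner (hz i hi) (hPunit i hi p hp),
    inf'_congr (hN i hi) rfl fun n hn =>
      half_norm_sub_sq_eq_one_sub_inner (hz i hi) (hNunit i hi n hn)]
  exact inf'_one_sub_sub_inf'_one_sub_le_supCon (hP i hi) (hN i hi) (inner ℝ (z i)) hτ hτ1
end
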